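/- Let (T, ⪯_T) be a tree whose root λ_T has infinitely many immediate successors λ₀, λ₁, λ₂, …, each T(λᵢ) finite. Let A = {a₀, a₁, …} be disjoint from T and define a tree S on (T ∖ {λ_T}) ∪ A with root a₀, where for each i, a_{i+1} and λᵢ are immediate successors of aᵢ, and the order on T ∖ {λ_T} is inherited. Then S has exactly one path, namely {a₀, a₁, a₂, …}, and every self-embedding δ of S that is not surjective restricts to (and extends by fixing the root to) a non-surjective self-embedding of T. -/

import Mathlib

/-- `y` is an immediate successor of `x`. -/
def ImmSucc {α : Type*} [PartialOrder α] (x y : α) : Prop :=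
  x < y ∧ ∀ z, x ≤ z → z ≤ y → z = x ∨ z = y

/-- Let T be a tree whose root has immediate successors λ₀, λ₁, …
(an infinite list of all of them), each T(λᵢ) finite.  Let S be the tree on
(T ∖ {root}) ∪ {a₀, a₁, …} with root a₀, where a_{i+1} and λᵢ are the immediate
successors of aᵢ.  Then S has exactly one path, namely {a₀, a₁, …}, and every
non-surjective self-embedding δ of S induces (by restricting to T ∖ {root} and fixing
the root) a non-surjective self-embedding of T. -/
theorem stmt11 {T : Type*} [PartialOrder T] [OrderBot T]
    (htree : ∀ n : T, (Set.Iic n).Finite ∧ IsChain (· ≤ ·) (Set.Iic n))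
    (lam : ℕ → T) (hlaminj : Function.Injective lam)
    (hlam : ∀ i, ImmSucc (⊥ : T) (lam i))
    (hlamall : ∀ x : T, ImmSucc (⊥ : T) x → ∃ i, x = lam i)
    (hfin : ∀ i, (Set.Ici (lam i)).Finite)
    {S : Type*} [PartialOrder S]
    (a : ℕ → S) (e : {x : T // x ≠ ⊥} → S)
    (hcover : ∀ s : S, (∃ i, s = a i) ∨ (∃ x, s = e x))
    (haa : ∀ i j, a i ≤ a j ↔ i ≤ j)
    (hea : ∀ x i, ¬ e x ≤ a i)
    (hae : ∀ i x, a i ≤ e x ↔ ∃ j, i ≤ j ∧ lam j ≤ (x : T))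
    (hee : ∀ x y, e x ≤ e y ↔ (x : T) ≤ (y : T)) :
    (IsMaxChain (· ≤ ·) (Set.range a) ∧ (Set.range a).Infinite ∧
      (∀ P : Set S, IsMaxChain (· ≤ ·) P → P.Infinite → P = Set.range a)) ∧
    ∀ δ : S → S, (∀ x y : S, x ≤ y ↔ δ x ≤ δ y) → ¬ Function.Surjective δ →
      ∃ δ' : T → T, (∀ x y : T, x ≤ y ↔ δ' x ≤ δ' y) ∧ ¬ Function.Surjective δ' ∧
        δ' ⊥ = ⊥ ∧ ∀ (x : T) (hx : x ≠ ⊥), ∃ hy : δ' x ≠ ⊥,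
          δ (e ⟨x, hx⟩) = e ⟨δ' x, hy⟩ := by
  classical
  have ainj : Function.Injective a := fun i j h =>
    le_antisymm ((haa i j).mp h.le) ((haa j i).mp h.ge)
  have einj : Function.Injective e := fun x y h =>
    Subtype.ext (le_antisymm ((hee x y).mp h.le) ((hee y x).mp h.ge))
  have hlamne : ∀ n, lam n ≠ (⊥ : T) := fun n => (hlam n).1.ne'
  -- every nonbot element of T lies above some lam j
  have L1 : ∀ x : T, x ≠ ⊥ → ∃ j, lam j ≤ x := by
    intro x hx
    have hsfin : {y : T | y ≤ x ∧ y ≠ ⊥}.Finite := (htree x).1.subset (fun y hy => hy.1)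
    obtain ⟨m, hm, hmin⟩ : ∃ m ∈ {y : T | y ≤ x ∧ y ≠ ⊥}, ∀ z ∈ {y : T | y ≤ x ∧ y ≠ ⊥},
        id z ≤ id m → id m = id z := by
      obtain ⟨m, hm⟩ := hsfin.exists_minimal ⟨x, le_rfl, hx⟩
      exact ⟨m, hm.1, fun z hz hzm => le_antisymm (hm.2 hz hzm) hzm⟩
    have him : ImmSucc (⊥ : T) m := by
      refine ⟨bot_lt_iff_ne_bot.mpr hm.2, fun z _ hzm => ?_⟩
      by_cases hz : z = ⊥
      · exact Or.inl hz
      · exact Or.inr (hmin z ⟨hzm.trans hm.1, hz⟩ hzm).symm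
    obtain ⟨j, hj⟩ := hlamall m him
    exact ⟨j, hj ▸ hm.1⟩
  -- uniqueness of the lam below a given element
  have L2 : ∀ (x : T) (j k : ℕ), lam j ≤ x → lam k ≤ x → j = k := by
    intro x j k hjx hkx
    rcases eq_or_ne (lam j) (lam k) with h | h
    · exact hlaminj h
    · rcases (htree x).2 hjx hkx h with h' | h'
      · rcases (hlam k).2 (lam j) bot_le h' with h'' | h''
        · exact absurd h'' (hlamne j)
        · exact hlaminj h''
      · rcases (hlam j).2 (lam k) bot_le h' with h'' | h''
        · exact absurd h'' (hlamne k)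
        · exact (hlaminj h'').symm
  have hJex : ∀ x : {x : T // x ≠ ⊥}, ∃ j, lam j ≤ (x : T) := fun x => L1 x x.2
  choose J hJ using hJex
  have hJu : ∀ (x : {x : T // x ≠ ⊥}) (k : ℕ), lam k ≤ (x : T) → k = J x :=
    fun x k hk => L2 (x : T) k (J x) hk (hJ x)
  have haeJ : ∀ i x, a i ≤ e x ↔ i ≤ J x := by
    intro i x
    rw [hae]
    constructor
    · rintro ⟨j, hij, hjx⟩; exact (hJu x j hjx) ▸ hij
    · intro h; exact ⟨J x, h, hJ x⟩
  have hJlam : ∀ n : ℕ, J ⟨lam n, hlamne n⟩ = n := fun n => (hJu _ n le_rfl).symm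
  -- finiteness of up-sets at e x
  have hIciFin : ∀ x : {x : T // x ≠ ⊥}, (Set.Ici (e x)).Finite := by
    intro x
    have h1 : (Subtype.val ⁻¹' (Set.Ici (lam (J x))) : Set {x : T // x ≠ ⊥}).Finite :=
      (hfin (J x)).preimage (Subtype.val_injective.injOn)
    refine (h1.image e).subset ?_
    intro s hs
    rcases hcover s with ⟨i, rfl⟩ | ⟨y, rfl⟩
    · exact absurd hs (hea x i)
    · exact ⟨y, (hJ x).trans ((hee x y).mp hs), rfl⟩
  -- Part 1
  have hchain : IsChain (· ≤ ·) (Set.range a) := by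
    rintro _ ⟨i, rfl⟩ _ ⟨j, rfl⟩ _
    rcases le_total i j with h | h
    · exact Or.inl ((haa i j).mpr h)
    · exact Or.inr ((haa j i).mpr h)
  have hsubrange : ∀ C : Set S, IsChain (· ≤ ·) C → Set.range a ⊆ C → C ⊆ Set.range a := by
    intro C hC hsub s hs
    rcases hcover s with ⟨i, rfl⟩ | ⟨x, rfl⟩
    · exact ⟨i, rfl⟩
    · exfalso
      have hmem : a (J x + 1) ∈ C := hsub ⟨_, rfl⟩
      have hne : e x ≠ a (J x + 1) := fun h => hea x (J x + 1) (h ▸ le_rfl)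
      rcases hC hs hmem hne with h | h
      · exact hea x _ h
      · exact absurd ((haeJ _ x).mp h) (by omega)
  have hmax : IsMaxChain (· ≤ ·) (Set.range a) :=
    ⟨hchain, fun C hC hsub => Set.Subset.antisymm hsub (hsubrange C hC hsub)⟩
  have huniq : ∀ P : Set S, IsMaxChain (· ≤ ·) P → P.Infinite → P = Set.range a := by
    intro P hP hPinf
    have hPsub : P ⊆ Set.range a := by
      intro s hs
      rcases hcover s with ⟨i, rfl⟩ | ⟨x, rfl⟩
      · exact ⟨i, rfl⟩
      · exfalso
        apply hPinf
        have hIic : (Set.Iic (e x)).Finite := by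
          refine (((Set.finite_Iic (J x)).image a).union
            (((htree (x : T)).1.preimage Subtype.val_injective.injOn).image e)).subset ?_
          intro p hp
          rcases hcover p with ⟨i, rfl⟩ | ⟨y, rfl⟩
          · exact Or.inl ⟨i, (haeJ i x).mp hp, rfl⟩
          · exact Or.inr ⟨y, (hee y x).mp hp, rfl⟩
        refine (hIic.union (hIciFin x)).subset ?_
        intro p hp
        rcases eq_or_ne p (e x) with rfl | hne
        · exact Or.inl le_rfl
        · rcases hP.1 hp hs hne with h | h
          · exact Or.inl h
          · exact Or.inr h
    exact hP.2 hmax.1 hPsub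
  refine ⟨⟨hmax, Set.infinite_range_of_injective ainj, huniq⟩, ?_⟩
  -- Part 2
  intro δ hδ hns
  have δinj : Function.Injective δ := fun x y h =>
    le_antisymm ((hδ x y).mpr h.le) ((hδ y x).mpr h.ge)
  -- δ maps the a's to a's
  have hA : ∀ i, ∃ k, δ (a i) = a k := by
    intro i
    rcases hcover (δ (a i)) with ⟨k, hk⟩ | ⟨x, hx⟩
    · exact ⟨k, hk⟩
    · exfalso
      refine (hIciFin x).not_infinite
        (Set.infinite_of_injective_forall_mem (f := fun k : ℕ => δ (a (i + k))) ?_ ?_)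
      · intro k l h
        have := ainj (δinj h)
        omega
      · intro k
        have h1 : a i ≤ a (i + k) := (haa i (i + k)).mpr (by omega)
        exact hx ▸ (hδ _ _).mp h1
  choose f hf using hA
  have fmono : StrictMono f := by
    intro i j hij
    have h1 : a i < a j :=
      lt_of_le_of_ne ((haa i j).mpr hij.le) (fun h => by have := ainj h; omega)
    have h2 : δ (a i) < δ (a j) := lt_of_le_of_ne ((hδ _ _).mp h1.le) (fun h => h1.ne (δinj h))
    rw [hf, hf] at h2
    have h3 := (haa (f i) (f j)).mp h2.le
    have h4 : f i ≠ f j := fun h => h2.ne (by rw [h])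
    omega
  have hfge : ∀ n, n ≤ f n := by
    intro n
    induction n with
    | zero => exact Nat.zero_le _
    | succ k ih => have : f k < f (k + 1) := fmono (by omega); omega
  -- δ maps the e's to e's
  have hB : ∀ x, ∃ y, δ (e x) = e y := by
    intro x
    rcases hcover (δ (e x)) with ⟨m, hm⟩ | ⟨y, hy⟩
    · exfalso
      have h1 : e x ≤ a (max (J x + 1) m) := by
        rw [hδ, hm, hf]
        exact (haa m _).mpr (le_trans (le_max_right _ _) (hfge _))
      exact hea x _ h1
    · exact ⟨y, hy⟩
  choose g hg using hB
  have ginj : Function.Injective g := fun x y h => einj (δinj (by rw [hg, hg, h]))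
  have hC : ∀ i x, i ≤ J x ↔ f i ≤ J (g x) := by
    intro i x
    rw [← haeJ i x, ← haeJ (f i) (g x), ← hf i, ← hg x]
    exact hδ _ _
  have hC1 : ∀ x, f (J x) ≤ J (g x) := fun x => (hC _ x).mp le_rfl
  have hC2 : ∀ x, J (g x) < f (J x + 1) := by
    intro x
    by_contra h
    have := (hC (J x + 1) x).mpr (by omega)
    omega
  -- g is not surjective
  have hgns : ¬ Function.Surjective g := by
    intro hgs
    have hAfin : ∀ N : ℕ, ({x : {x : T // x ≠ ⊥} | J x < N}).Finite := by
      intro N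
      have h1 : {x : {x : T // x ≠ ⊥} | J x < N} ⊆
          Subtype.val ⁻¹' (⋃ j ∈ Finset.range N, Set.Ici (lam j)) := by
        intro x hx
        simp only [Set.mem_preimage, Set.mem_iUnion]
        exact ⟨J x, Finset.mem_range.mpr hx, hJ x⟩
      exact ((Set.Finite.biUnion (Finset.range N).finite_toSet (fun j _ => hfin j)).preimage
        Subtype.val_injective.injOn).subset h1
    have himg : ∀ N : ℕ, g '' {x | J x < N} = {x | J x < f N} := by
      intro N
      apply Set.Subset.antisymm
      · rintro _ ⟨x, hx, rfl⟩
        have h1 : J x + 1 ≤ N := hx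
        exact lt_of_lt_of_le (hC2 x) (fmono.monotone h1)
      · intro y hy
        obtain ⟨x, rfl⟩ := hgs y
        exact ⟨x, fmono.lt_iff_lt.mp (lt_of_le_of_lt (hC1 x) hy), rfl⟩
    have hfid : ∀ N, f N = N := by
      intro N
      by_contra hne
      have hNlt : N < f N := lt_of_le_of_ne (hfge N) (Ne.symm hne)
      have hss : {x : {x : T // x ≠ ⊥} | J x < N} ⊂ {x | J x < f N} := by
        constructor
        · intro x hx; exact lt_of_lt_of_le hx (hfge N)
        · intro hsub
          have : (⟨lam N, hlamne N⟩ : {x : T // x ≠ ⊥}) ∈ {x : {x : T // x ≠ ⊥} | J x < N} :=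
            hsub (by simp only [Set.mem_setOf_eq, hJlam]; exact hNlt)
          simp only [Set.mem_setOf_eq, hJlam] at this
          omega
      have hcard : ({x : {x : T // x ≠ ⊥} | J x < N}).ncard = ({x | J x < f N}).ncard := by
        rw [← himg N, Set.ncard_image_of_injective _ ginj]
      have := Set.ncard_lt_ncard hss (hAfin (f N))
      omega
    apply hns
    intro s
    rcases hcover s with ⟨m, rfl⟩ | ⟨x, rfl⟩
    · exact ⟨a m, by rw [hf, hfid]⟩
    · obtain ⟨y, rfl⟩ := hgs x
      exact ⟨e y, hg y⟩
  have hx₀ : ∃ x₀, ∀ y, g y ≠ x₀ := by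
    by_contra h
    push_neg at h
    exact hgns h
  obtain ⟨x₀, hx₀⟩ := hx₀
  refine ⟨fun t => if h : t = ⊥ then ⊥ else ↑(g ⟨t, h⟩), ?_, ?_, dif_pos rfl, ?_⟩
  · -- embedding
    intro x y
    beta_reduce
    by_cases hx : x = ⊥
    · subst hx
      simp only [dif_pos rfl]
      exact ⟨fun _ => bot_le, fun _ => bot_le⟩
    · by_cases hy : y = ⊥
      · subst hy
        rw [dif_pos rfl, dif_neg hx]
        simp only [le_bot_iff]
        exact ⟨fun h => absurd h hx, fun h => absurd h (g ⟨x, hx⟩).2⟩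
      · rw [dif_neg hx, dif_neg hy]
        constructor
        · intro h
          have h1 : e ⟨x, hx⟩ ≤ e ⟨y, hy⟩ := (hee _ _).mpr h
          have h2 := (hδ _ _).mp h1
          rw [hg, hg] at h2
          exact (hee _ _).mp h2
        · intro h
          have h1 : e (g ⟨x, hx⟩) ≤ e (g ⟨y, hy⟩) := (hee _ _).mpr h
          rw [← hg, ← hg] at h1
          exact (hee _ _).mp ((hδ _ _).mpr h1)
  · -- not surjective
    intro hsurj
    obtain ⟨t, ht⟩ := hsurj ↑x₀
    beta_reduce at ht
    by_cases h : t = ⊥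
    · rw [dif_pos h] at ht
      exact x₀.2 ht.symm
    · rw [dif_neg h] at ht
      exact hx₀ ⟨t, h⟩ (Subtype.ext ht)
  · -- compatibility with δ
    intro x hx
    have h1 : (if h : x = ⊥ then (⊥ : T) else ↑(g ⟨x, h⟩)) = ↑(g ⟨x, hx⟩) := dif_neg hx
    refine ⟨by beta_reduce; rw [h1]; exact (g ⟨x, hx⟩).2, ?_⟩
    rw [hg]
    congr 1
    exact Subtype.ext h1.symm
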